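/- arXiv:1402.4594 — 3 statements merged into one kernel-verified Lean document; each statement's English description precedes it below -/
import Mathlib

section
/- Let G ≤ GL_{n-1}(F_2) be the subgroup generated by the permutation matrices of S_{n-1} (permuting the basis x_1,...,x_{n-1}) together with the map σ defined by σ(x_i) = x_{i+1} for i < n-1 and σ(x_{n-1}) = x_1 + ... + x_{n-1}. Then the cosets S_{n-1}, S_{n-1}σ, S_{n-1}σ^2, ..., S_{n-1}σ^{n-1} are pairwise disjoint, so |G| ≥ n!. -/
/-!
For `0 < m ≤ d`, the power `σ^m` of the shift on `F_2^d` maps the basis vector `x_{d-m+1}` to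
`x_1 + ⋯ + x_d`. A permutation matrix maps only the all-ones vector to the all-ones vector, and for
`d ≥ 2` that is not a basis vector; hence `σ^m ∉ S_d`. Therefore `a σ^i = b σ^k` with
`a, b ∈ S_d` and `i < k ≤ d` is impossible, as `b⁻¹ a = σ^(k-i)`, and the `(d + 1) · d!` products
`a σ^i` are distinct elements of `⟨S_d, σ⟩`.
-/

/-- The linear map `σ` on `F_2^d` (basis `x_1, …, x_d`) with `σ(x_i) = x_{i+1}`
for `i < d` and `σ(x_d) = x_1 + ⋯ + x_d`, in coordinates; and the associated
linear automorphism `sigEquiv`. -/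
def sigMap (d : ℕ) : (Fin d → ZMod 2) →ₗ[ZMod 2] (Fin d → ZMod 2) where
  toFun v := fun j =>
    (if (j : ℕ) = 0 then 0 else v ⟨(j : ℕ) - 1, lt_of_le_of_lt (Nat.sub_le _ _) j.isLt⟩) +
      v ⟨d - 1, Nat.sub_lt j.pos Nat.one_pos⟩
  map_add' u v := by
    funext j
    by_cases h : (j : ℕ) = 0 <;> simp [h, Pi.add_apply] <;> ring
  map_smul' c v := by
    funext j
    by_cases h : (j : ℕ) = 0 <;> simp [h, Pi.smul_apply] <;> ring

noncomputable def sigEquiv (d : ℕ) : (Fin d → ZMod 2) ≃ₗ[ZMod 2] (Fin d → ZMod 2) :=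
  LinearEquiv.ofBijective (sigMap d) (by
    have hinj : Function.Injective (sigMap d) := by
      rw [← LinearMap.ker_eq_bot, LinearMap.ker_eq_bot']
      intro v hv
      funext i
      have hl : v ⟨d - 1, Nat.sub_lt i.pos Nat.one_pos⟩ = 0 := by
        have := congrFun hv ⟨0, i.pos⟩
        simpa [sigMap] using this
      rcases eq_or_ne (i : ℕ) (d - 1) with h | h
      · have hi : i = ⟨d - 1, Nat.sub_lt i.pos Nat.one_pos⟩ := Fin.ext (by simpa using h)
        rw [hi, hl]; rfl
      · have hi1 : (i : ℕ) + 1 < d := by omega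
        have h2 := congrFun hv ⟨(i : ℕ) + 1, hi1⟩
        have h3 : (⟨(i : ℕ) + 1 - 1, lt_of_le_of_lt (Nat.sub_le _ _) hi1⟩ : Fin d) = i :=
          Fin.ext (by simp)
        simp [sigMap, hl, h3] at h2
        simpa using h2
    exact ⟨hinj, Finite.surjective_of_injective hinj⟩)


/-- The permutation matrices: automorphisms of `F_2^d` induced by permuting
the basis `x_1, …, x_d`. -/
def permSubset (d : ℕ) : Set ((Fin d → ZMod 2) ≃ₗ[ZMod 2] (Fin d → ZMod 2)) :=
  Set.range fun τ : Equiv.Perm (Fin d) =>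
    LinearEquiv.funCongrLeft (ZMod 2) (ZMod 2) τ

section CosetsOfPowers

variable {G : Type*} [Group G] {H : Subgroup G} {g : G} {d : ℕ}

theorem disjoint_image_mul_pow_of_lt (hg : ∀ m, 0 < m → m ≤ d → g ^ m ∉ H) {i k : ℕ}
    (hik : i < k) (hk : k ≤ d) :
    Disjoint ((· * g ^ i) '' (H : Set G)) ((· * g ^ k) '' (H : Set G)) := by
  rw [Set.disjoint_left]
  rintro _ ⟨a, ha, rfl⟩ ⟨b, hb, hab⟩
  have hpow : b⁻¹ * a = g ^ (k - i) := by
    rw [pow_sub g hik.le, eq_mul_inv_iff_mul_eq, mul_assoc]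
    exact inv_mul_eq_of_eq_mul hab.symm
  exact hg (k - i) (by omega) (by omega) (hpow ▸ H.mul_mem (H.inv_mem hb) ha)

theorem disjoint_image_mul_pow (hg : ∀ m, 0 < m → m ≤ d → g ^ m ∉ H) {i k : ℕ}
    (hi : i ≤ d) (hk : k ≤ d) (hik : i ≠ k) :
    Disjoint ((· * g ^ i) '' (H : Set G)) ((· * g ^ k) '' (H : Set G)) := by
  rcases hik.lt_or_gt with hlt | hlt
  · exact disjoint_image_mul_pow_of_lt hg hlt hk
  · exact (disjoint_image_mul_pow_of_lt hg hlt hi).symm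

theorem injective_mul_pow (hg : ∀ m, 0 < m → m ≤ d → g ^ m ∉ H) :
    Function.Injective fun p : H × Fin (d + 1) => (p.1 : G) * g ^ (p.2 : ℕ) := by
  rintro ⟨a, i⟩ ⟨b, k⟩ hab
  have hik : i = k := by
    by_contra hne
    exact Set.disjoint_left.mp (disjoint_image_mul_pow hg (Nat.lt_succ_iff.mp i.isLt)
      (Nat.lt_succ_iff.mp k.isLt) (Fin.val_injective.ne hne)) ⟨a, a.2, hab⟩ ⟨b, b.2, rfl⟩
  subst hik
  simpa using hab

theorem succ_mul_card_le_card_of_pow_notMem {K : Subgroup G} [Finite K] (hHK : H ≤ K)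
    (hgK : g ∈ K) (hg : ∀ m, 0 < m → m ≤ d → g ^ m ∉ H) :
    (d + 1) * Nat.card H ≤ Nat.card K := by
  have hinj : Function.Injective fun p : H × Fin (d + 1) =>
      (⟨p.1 * g ^ (p.2 : ℕ), K.mul_mem (hHK p.1.2) (K.pow_mem hgK _)⟩ : K) :=
    fun p q hpq => injective_mul_pow hg (congrArg Subtype.val hpq)
  simpa [Nat.card_prod, mul_comm] using Nat.card_le_card_of_injective _ hinj

end CosetsOfPowers

instance LinearEquiv.finite {R M : Type*} [Semiring R] [AddCommMonoid M] [Module R M]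
    [Finite M] : Finite (M ≃ₗ[R] M) :=
  Finite.of_injective _ LinearEquiv.toEquiv_injective

section PermutationMatrices

variable (R : Type*) [Semiring R] (ι : Type*)

def permSubgroup : Subgroup ((ι → R) ≃ₗ[R] (ι → R)) where
  carrier := Set.range fun τ : Equiv.Perm ι => LinearEquiv.funCongrLeft R R τ
  mul_mem' := by
    rintro _ _ ⟨τ₁, rfl⟩ ⟨τ₂, rfl⟩
    exact ⟨τ₁.trans τ₂, LinearEquiv.funCongrLeft_comp R R τ₁ τ₂⟩
  one_mem' := ⟨Equiv.refl ι, LinearEquiv.funCongrLeft_id R R⟩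
  inv_mem' := by
    rintro _ ⟨τ, rfl⟩
    exact ⟨τ.symm, (LinearEquiv.funCongrLeft_symm R R τ).symm⟩

variable {R ι}

theorem LinearEquiv.funCongrLeft_injective [Nontrivial R] :
    Function.Injective fun τ : Equiv.Perm ι => LinearEquiv.funCongrLeft R R τ := by
  classical
  intro τ₁ τ₂ h
  ext j
  have hj := congrFun (LinearEquiv.congr_fun h (Pi.single (τ₂ j) 1)) j
  by_contra hne
  simp [hne] at hj

theorem card_permSubgroup [Nontrivial R] [Fintype ι] :
    Nat.card (permSubgroup R ι) = (Fintype.card ι).factorial := by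
  classical
  rw [← Fintype.card_perm, ← Nat.card_eq_fintype_card]
  exact Nat.card_range_of_injective LinearEquiv.funCongrLeft_injective

theorem eq_const_of_mem_permSubgroup {h : (ι → R) ≃ₗ[R] (ι → R)} (hh : h ∈ permSubgroup R ι)
    {v : ι → R} {c : R} (hv : h v = fun _ => c) : v = fun _ => c := by
  obtain ⟨τ, rfl⟩ := hh
  funext i
  simpa using congrFun hv (τ.symm i)

end PermutationMatrices

section ShiftMap

variable {d : ℕ}

theorem sigEquiv_apply (v : Fin d → ZMod 2) (j : Fin d) :
    sigEquiv d v j =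
      (if (j : ℕ) = 0 then 0 else v ⟨(j : ℕ) - 1, lt_of_le_of_lt (Nat.sub_le _ _) j.isLt⟩) +
        v ⟨d - 1, Nat.sub_lt j.pos Nat.one_pos⟩ := rfl

theorem sigEquiv_single_of_succ_lt {i : ℕ} (h : i + 1 < d) :
    sigEquiv d (Pi.single ⟨i, by omega⟩ 1) = Pi.single ⟨i + 1, h⟩ 1 := by
  funext j
  simp only [sigEquiv_apply, Pi.single_apply, Fin.ext_iff]
  split_ifs <;> first | rfl | omega

theorem sigEquiv_single_last (hd : 0 < d) :
    sigEquiv d (Pi.single ⟨d - 1, by omega⟩ 1) = fun _ => 1 := by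
  funext j
  simp only [sigEquiv_apply, Pi.single_apply, Fin.ext_iff]
  split_ifs <;> first | rfl | omega

theorem sigEquiv_pow_single {i m : ℕ} (h : i + m < d) :
    (sigEquiv d ^ m) (Pi.single ⟨i, by omega⟩ 1) = Pi.single ⟨i + m, h⟩ 1 := by
  induction m with
  | zero => rfl
  | succ m ih =>
    rw [pow_succ', LinearEquiv.mul_apply, ih (by omega)]
    exact sigEquiv_single_of_succ_lt h

theorem sigEquiv_pow_single_sub {m : ℕ} (hm : 0 < m) (hmd : m ≤ d) :
    (sigEquiv d ^ m) (Pi.single ⟨d - m, by omega⟩ 1) = fun _ => 1 := by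
  obtain ⟨k, rfl⟩ : ∃ k, m = k + 1 := ⟨m - 1, by omega⟩
  rw [pow_succ', LinearEquiv.mul_apply, sigEquiv_pow_single (by omega)]
  simpa [show d - (k + 1) + k = d - 1 by omega] using sigEquiv_single_last (d := d) (by omega)

theorem sigEquiv_pow_notMem_permSubgroup (hd : 2 ≤ d) {m : ℕ} (hm : 0 < m) (hmd : m ≤ d) :
    sigEquiv d ^ m ∉ permSubgroup (ZMod 2) (Fin d) := by
  intro hmem
  have hconst := congrFun (eq_const_of_mem_permSubgroup hmem (sigEquiv_pow_single_sub hm hmd))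
  by_cases h0 : d - m = 0
  · simpa [h0, Pi.single_apply, Fin.ext_iff] using hconst ⟨1, by omega⟩
  · simpa [Fin.ext_iff, Ne.symm h0] using hconst ⟨0, by omega⟩

end ShiftMap

/-- For `n ≥ 3`, the cosets `S_{n-1} σ^i`, `0 ≤ i ≤ n-1`, inside
`GL_{n-1}(F_2)` are pairwise disjoint, so the subgroup generated by the
permutation matrices `S_{n-1}` together with `σ` has order at least `n!`. -/
theorem stmt3 (n : ℕ) (hn : 3 ≤ n) :
    (∀ i k : ℕ, i ≤ n - 1 → k ≤ n - 1 → i ≠ k →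
      Disjoint ((fun g => g * sigEquiv (n - 1) ^ i) '' permSubset (n - 1))
        ((fun g => g * sigEquiv (n - 1) ^ k) '' permSubset (n - 1))) ∧
    Nat.factorial n ≤
      Nat.card (Subgroup.closure (permSubset (n - 1) ∪ {sigEquiv (n - 1)})) := by
  have hσ : ∀ m, 0 < m → m ≤ n - 1 →
      sigEquiv (n - 1) ^ m ∉ permSubgroup (ZMod 2) (Fin (n - 1)) :=
    fun _ => sigEquiv_pow_notMem_permSubgroup (by omega)
  refine ⟨fun i k hi hk hik => disjoint_image_mul_pow hσ hi hk hik, ?_⟩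
  have hcard := succ_mul_card_le_card_of_pow_notMem
    (H := permSubgroup (ZMod 2) (Fin (n - 1)))
    (K := Subgroup.closure (permSubset (n - 1) ∪ {sigEquiv (n - 1)}))
    (fun _ h => Subgroup.subset_closure (Or.inl h)) (Subgroup.subset_closure (Or.inr rfl)) hσ
  rwa [card_permSubgroup, Fintype.card_fin, Nat.sub_add_cancel (by omega),
    Nat.mul_factorial_pred (by omega)] at hcard
end

section
/- The elementary symmetric polynomials of degrees 2 through n in F_2[x_1,...,x_{n-1}], obtained by substituting x_n = x_1 + ... + x_{n-1} into w_2,...,w_n ∈ F_2[x_1,...,x_n], form a homogeneous system of parameters: F_2[x_1,...,x_{n-1}] is a finitely generated module over the subalgebra they generate. -/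
/-!
Write `y₁, …, y_n` for the images of `x₁, …, x_n`, so `y_n = y₁ + ⋯ + y_{n-1}`. For `i < n`,
`xᵢ = yᵢ` is a root of `∏ⱼ (T - yⱼ) = Σₖ (-1)ᵏ eₖ(y) T^{n-k}`, a monic polynomial whose
coefficients are the images of `w₀ = 1, w₁, …, w_n`. Over `F_2` the image of `w₁` is
`2 (y₁ + ⋯ + y_{n-1}) = 0`, so all coefficients lie in the subalgebra generated by the images of
`w₂, …, w_n`. Hence the variables are integral over that subalgebra, and a polynomial ring
generated by finitely many integral elements is a finite module.
-/

open MvPolynomial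

/-- The substitution `x_i ↦ x_i` for `i < n` and `x_n ↦ x_1 + ⋯ + x_{n-1}`,
as an algebra map `F_2[x_1, …, x_n] → F_2[x_1, …, x_{n-1}]`. -/
noncomputable def substLast (n : ℕ) :
    MvPolynomial (Fin n) (ZMod 2) →ₐ[ZMod 2] MvPolynomial (Fin (n - 1)) (ZMod 2) :=
  aeval fun i : Fin n =>
    if h : (i : ℕ) < n - 1 then X ⟨(i : ℕ), h⟩ else ∑ j : Fin (n - 1), X j

open Polynomial in
theorem isIntegral_of_mem_of_esymm_mem_range {R S : Type*} [CommRing R] [CommRing S]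
    [Algebra R S] {s : Multiset S}
    (hs : ∀ k ≤ Multiset.card s, s.esymm k ∈ Set.range (algebraMap R S)) {x : S}
    (hx : x ∈ s) : IsIntegral R x := by
  nontriviality S
  set p := (s.map fun t => Polynomial.X - Polynomial.C t).prod
  have hlifts : p ∈ lifts (algebraMap R S) := by
    refine (lifts_iff_coeff_lifts p).2 fun k => ?_
    rcases le_or_gt k (Multiset.card s) with hk | hk
    · obtain ⟨r, hr⟩ := hs _ (Nat.sub_le _ k)
      refine ⟨(-1) ^ (Multiset.card s - k) * r, ?_⟩
      simp [p, Multiset.prod_X_sub_C_coeff s hk, hr]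
    · rw [coeff_eq_zero_of_natDegree_lt (by rwa [natDegree_multiset_prod_X_sub_C_eq_card])]
      exact ⟨0, map_zero _⟩
  obtain ⟨q, hq, -, hq_monic⟩ :=
    lifts_and_natDegree_eq_and_monic hlifts (monic_multisetProd_X_sub_C s)
  have hp_root : p.eval x = 0 := by
    rw [eval_multiset_prod, Multiset.map_map]
    exact Multiset.prod_eq_zero (Multiset.mem_map.2 ⟨x, hx, by simp⟩)
  exact ⟨q, hq_monic, by rw [← Polynomial.eval_map, hq, hp_root]⟩

theorem MvPolynomial.finite_of_forall_isIntegral_X {R σ : Type*} [CommRing R] [Finite σ]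
    (A : Subalgebra R (MvPolynomial σ R)) (h : ∀ i, IsIntegral A (X i : MvPolynomial σ R)) :
    Module.Finite A (MvPolynomial σ R) := by
  have hgen : Algebra.adjoin A (Set.range (X : σ → MvPolynomial σ R)) = ⊤ := by
    rw [← Algebra.adjoin_adjoin_of_tower R, adjoin_range_X, Algebra.coe_top, Algebra.adjoin_univ]
  refine Module.finite_def.2 ?_
  rw [← Algebra.top_toSubmodule, ← hgen]
  exact fg_adjoin_of_finite (Set.finite_range _) (Set.forall_mem_range.2 h)

theorem substLast_esymm (n k : ℕ) :
    substLast n (esymm (Fin n) (ZMod 2) k)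
      = (Finset.univ.val.map fun i => substLast n (X i)).esymm k := by
  simp only [substLast, aeval_X]
  exact aeval_esymm_eq_multiset_esymm _ _ k _

theorem substLast_X_castSucc (m : ℕ) (i : Fin m) : substLast (m + 1) (X i.castSucc) = X i := by
  simp [substLast]

theorem substLast_X_last (m : ℕ) :
    substLast (m + 1) (X (Fin.last m)) = ∑ j : Fin m, X j := by
  simp [substLast]

theorem substLast_esymm_one (m : ℕ) : substLast (m + 1) (esymm (Fin (m + 1)) (ZMod 2) 1) = 0 := by
  rw [esymm_one, map_sum, Fin.sum_univ_castSucc]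
  simp only [substLast_X_castSucc, substLast_X_last]
  exact CharTwo.add_self_eq_zero _

theorem substLast_esymm_mem_adjoin (m : ℕ) {k : ℕ} (hk : k ≤ m + 1) :
    substLast (m + 1) (esymm (Fin (m + 1)) (ZMod 2) k) ∈
      Algebra.adjoin (ZMod 2) (Set.range fun i : Fin m =>
        substLast (m + 1) (esymm (Fin (m + 1)) (ZMod 2) ((i : ℕ) + 2))) := by
  match k, hk with
  | 0, _ => rw [esymm_zero, map_one]; exact Subalgebra.one_mem _
  | 1, _ => rw [substLast_esymm_one]; exact Subalgebra.zero_mem _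
  | k + 2, hk => exact Algebra.subset_adjoin ⟨⟨k, by omega⟩, rfl⟩

/-- The images in `F_2[x_1, …, x_{n-1}]` of the elementary symmetric
polynomials `w_2, …, w_n` under the substitution `x_n ↦ x_1 + ⋯ + x_{n-1}`
form a homogeneous system of parameters: `F_2[x_1, …, x_{n-1}]` is a finitely
generated module over the subalgebra they generate. -/
theorem stmt14 (n : ℕ) (hn : 2 ≤ n) :
    Module.Finite
      (Algebra.adjoin (ZMod 2)
        (Set.range fun i : Fin (n - 1) =>
          substLast n (esymm (Fin n) (ZMod 2) ((i : ℕ) + 2))))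
      (MvPolynomial (Fin (n - 1)) (ZMod 2)) := by
  obtain ⟨m, rfl⟩ : ∃ m, n = m + 1 := ⟨n - 1, by omega⟩
  refine MvPolynomial.finite_of_forall_isIntegral_X _ fun i => ?_
  have hmem : X i ∈ Finset.univ.val.map fun j => substLast (m + 1) (X j) :=
    Multiset.mem_map.2 ⟨i.castSucc, Finset.mem_univ_val _, substLast_X_castSucc m i⟩
  refine isIntegral_of_mem_of_esymm_mem_range (fun k hk => ?_) hmem
  rw [← substLast_esymm]
  exact ⟨⟨_, substLast_esymm_mem_adjoin m (by simpa using hk)⟩, rfl⟩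
end

section
/- Let σ^j be the j-th power of the linear map σ on F_2^{n-1} (basis x_1,...,x_{n-1}) given by σ(x_i) = x_{i+1} for i < n-1 and σ(x_{n-1}) = x_1 + ... + x_{n-1}. Then for 1 ≤ j ≤ n-1, σ^j(x_{n-j}) = x_1 + x_2 + ... + x_{n-1}, and consequently σ^j is not a permutation matrix of the basis x_1,...,x_{n-1}. -/
section sigMap

variable {d : ℕ}

theorem sigMap_single_of_succ_lt (i : ℕ) (hi : i + 1 < d) :
    sigMap d (Pi.single ⟨i, by omega⟩ 1) = Pi.single ⟨i + 1, hi⟩ 1 := by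
  funext k
  simp only [sigMap, LinearMap.coe_mk, AddHom.coe_mk, Pi.single_apply, Fin.ext_iff]
  split_ifs <;> first | decide | omega

theorem sigMap_single_last (hd : 0 < d) :
    sigMap d (Pi.single ⟨d - 1, by omega⟩ 1) = fun _ => 1 := by
  funext k
  simp only [sigMap, LinearMap.coe_mk, AddHom.coe_mk, Pi.single_apply, Fin.ext_iff]
  split_ifs <;> first | decide | omega

theorem sigMap_pow_single (i k : ℕ) (hik : i + k < d) :
    ((sigMap d : Module.End (ZMod 2) (Fin d → ZMod 2)) ^ k) (Pi.single ⟨i, by omega⟩ 1) =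
      Pi.single ⟨i + k, hik⟩ 1 := by
  induction k with
  | zero => rfl
  | succ k ih =>
    rw [pow_succ', Module.End.mul_apply, ih (by omega), sigMap_single_of_succ_lt (i + k) hik]
    rfl

theorem sigMap_pow_single_sub (j : ℕ) (hj1 : 1 ≤ j) (hjd : j ≤ d) :
    ((sigMap d : Module.End (ZMod 2) (Fin d → ZMod 2)) ^ j) (Pi.single ⟨d - j, by omega⟩ 1) =
      fun _ => 1 := by
  obtain ⟨k, rfl⟩ := Nat.exists_eq_add_of_le' hj1
  rw [pow_succ', Module.End.mul_apply, sigMap_pow_single _ k (by omega)]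
  convert sigMap_single_last (d := d) (by omega) using 4
  omega

end sigMap

theorem Pi.single_one_ne_const_one {ι R : Type*} [DecidableEq ι] [Nontrivial ι] [Zero R] [One R]
    [NeZero (1 : R)] (i : ι) : Pi.single i (1 : R) ≠ fun _ => (1 : R) := by
  obtain ⟨k, hk⟩ := exists_ne i
  intro h
  simpa [Pi.single_eq_of_ne hk] using congrFun h k

/-- For `n ≥ 3` and `1 ≤ j ≤ n-1`, the `j`-th power of `σ` on `F_2^{n-1}`
sends the basis vector `x_{n-j}` to `x_1 + x_2 + ⋯ + x_{n-1}` (the all-ones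
vector); consequently `σ^j` is not a permutation matrix of the basis. -/
theorem stmt18 (n : ℕ) (hn : 3 ≤ n) (j : ℕ) (hj1 : 1 ≤ j) (hj2 : j ≤ n - 1) :
    (((sigMap (n - 1) : Module.End (ZMod 2) (Fin (n - 1) → ZMod 2)) ^ j)
        (Pi.single (⟨n - 1 - j, by omega⟩ : Fin (n - 1)) 1) = fun _ => 1) ∧
    ¬∃ τ : Equiv.Perm (Fin (n - 1)), ∀ i : Fin (n - 1),
      (((sigMap (n - 1) : Module.End (ZMod 2) (Fin (n - 1) → ZMod 2)) ^ j)
          (Pi.single i 1)) = Pi.single (τ i) 1 := by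
  have hones := sigMap_pow_single_sub j hj1 hj2
  refine ⟨hones, ?_⟩
  rintro ⟨τ, hτ⟩
  have : Nontrivial (Fin (n - 1)) := Fin.nontrivial_iff_two_le.mpr (by omega)
  exact Pi.single_one_ne_const_one (τ _) ((hτ _).symm.trans hones)
end
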